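/- arXiv:math/9405210 — 3 statements merged into one kernel-verified Lean document; each statement's English description precedes it below -/
import Mathlib

section
/- If f:[1,∞)→[1,∞) is increasing, submultiplicative, and satisfies f(x) < x for x > 1, then f(n) = o(n) as n → ∞ over the natural numbers; that is, lim_{n→∞} f(n)/n = 0. -/
/-!
Submultiplicativity gives `f (2 ^ (k + 1)) ≤ f 2 ^ (k + 1)`, and monotonicity transfers this to
every `n < 2 ^ (k + 1)`. For `2 ^ k ≤ n` this yields `f n / n ≤ f 2 * (f 2 / 2) ^ k`, which tends
to `0` because `f 2 < 2`.
-/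

open Filter Topology

section Submultiplicative

variable {f : ℝ → ℝ}

theorem apply_pow_succ_le_pow_succ_of_submultiplicative
    (hsub : ∀ x y : ℝ, 1 ≤ x → 1 ≤ y → f (x * y) ≤ f x * f y)
    {x : ℝ} (hx : 1 ≤ x) (hfx : 0 ≤ f x) (k : ℕ) :
    f (x ^ (k + 1)) ≤ f x ^ (k + 1) := by
  induction k with
  | zero => simp
  | succ k ih =>
    calc f (x ^ (k + 1 + 1)) = f (x ^ (k + 1) * x) := by rw [pow_succ]
      _ ≤ f (x ^ (k + 1)) * f x := hsub _ _ (one_le_pow₀ hx) hx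
      _ ≤ f x ^ (k + 1) * f x := mul_le_mul_of_nonneg_right ih hfx
      _ = f x ^ (k + 1 + 1) := (pow_succ _ _).symm

theorem div_le_mul_pow_log_of_submultiplicative
    (hmono : ∀ x y : ℝ, 1 ≤ x → x ≤ y → f x ≤ f y)
    (hsub : ∀ x y : ℝ, 1 ≤ x → 1 ≤ y → f (x * y) ≤ f x * f y)
    {b : ℕ} (hb : 1 < b) (hfb : 0 ≤ f b) {n : ℕ} (hn : n ≠ 0) :
    f n / n ≤ f b * (f b / b) ^ Nat.log b n := by
  set k := Nat.log b n
  have hb1 : (1 : ℝ) ≤ b := by exact_mod_cast hb.le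
  have hlow : (b : ℝ) ^ k ≤ n := by exact_mod_cast Nat.pow_log_le_self b hn
  have hhigh : (n : ℝ) ≤ (b : ℝ) ^ (k + 1) := by
    exact_mod_cast (Nat.lt_pow_succ_log_self hb n).le
  have hfn : f n ≤ f b ^ (k + 1) :=
    (hmono _ _ (by exact_mod_cast Nat.one_le_iff_ne_zero.2 hn) hhigh).trans
      (apply_pow_succ_le_pow_succ_of_submultiplicative hsub hb1 hfb k)
  calc f n / n ≤ f b ^ (k + 1) / (b : ℝ) ^ k :=
        div_le_div₀ (by positivity) hfn (by positivity) hlow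
    _ = f b * (f b / b) ^ k := by
        rw [div_pow, pow_succ']
        ring

end Submultiplicative

theorem tendsto_pow_log_atTop_nhds_zero {c : ℝ} (hc₀ : 0 ≤ c) (hc₁ : c < 1) {b : ℕ}
    (hb : 1 < b) : Tendsto (fun n : ℕ => c ^ Nat.log b n) atTop (𝓝 0) := by
  have hlog : Tendsto (Nat.log b) atTop atTop :=
    tendsto_atTop_atTop.2 fun k => ⟨b ^ k, fun _ hn => Nat.le_log_of_pow_le hb hn⟩
  exact (tendsto_pow_atTop_nhds_zero_of_lt_one hc₀ hc₁).comp hlog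

/-- If f:[1,∞)→[1,∞) is increasing, submultiplicative and f(x) < x for x > 1,
then f(n)/n → 0 as n → ∞ over the naturals. -/
theorem submultiplicative_littleO (f : ℝ → ℝ)
    (hmaps : ∀ x : ℝ, 1 ≤ x → 1 ≤ f x)
    (hmono : ∀ x y : ℝ, 1 ≤ x → x ≤ y → f x ≤ f y)
    (hsub : ∀ x y : ℝ, 1 ≤ x → 1 ≤ y → f (x * y) ≤ f x * f y)
    (hlt : ∀ x : ℝ, 1 < x → f x < x) :
    Tendsto (fun n : ℕ => f n / n) atTop (nhds 0) := by
  have hf2 : 0 ≤ f 2 := zero_le_one.trans (hmaps 2 one_le_two)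
  have hratio : f 2 / 2 < 1 := (div_lt_one two_pos).2 (hlt 2 one_lt_two)
  have hmajorant : Tendsto (fun n : ℕ => f 2 * (f 2 / 2) ^ Nat.log 2 n) atTop (𝓝 0) := by
    simpa using (tendsto_pow_log_atTop_nhds_zero (by positivity) hratio one_lt_two).const_mul (f 2)
  refine squeeze_zero' ?_ ?_ hmajorant
  · filter_upwards [eventually_ge_atTop 1] with n hn
    exact div_nonneg (zero_le_one.trans (hmaps _ (by exact_mod_cast hn))) n.cast_nonneg
  · filter_upwards [eventually_ne_atTop 0] with n hn
    simpa using
      div_le_mul_pow_log_of_submultiplicative hmono hsub one_lt_two (by simpa using hf2) hn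
end

section
/- Suppose (β_n)_{n≥1} is a sequence of positive reals with β_{mn} ≥ β_m · β_n for all m,n ≥ 1, β_n ≥ n^{1/q} for all n, and β_n ≤ f(n) · n^{1/q} for all n, where q ≥ 1 and f:[1,∞)→[1,∞) satisfies lim_{x→∞} f(x) x^{-a} = 0 for every a > 0. Then β_n = n^{1/q} for all n. -/
open Filter

/-! Supermultiplicativity gives `β n ^ k ≤ β (n ^ k) ≤ f (n ^ k) * (n ^ k) ^ (1 / q)`. Since `f` grows
more slowly than every power `x ^ a`, taking `k`-th roots for large `k` yields
`β n ≤ n ^ (1 / q + a)` for every `a > 0`, hence `β n ≤ n ^ (1 / q)`. -/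

theorem pow_le_apply_pow_of_supermul {β : ℕ → ℝ}
    (hsuper : ∀ m n : ℕ, 1 ≤ m → 1 ≤ n → β m * β n ≤ β (m * n)) {n : ℕ} (hn : 1 ≤ n)
    (hβ : 0 ≤ β n) {k : ℕ} (hk : 1 ≤ k) : β n ^ k ≤ β (n ^ k) := by
  induction k, hk using Nat.le_induction with
  | base => simp
  | succ k hk ih =>
    calc β n ^ (k + 1) = β n ^ k * β n := pow_succ _ _
      _ ≤ β (n ^ k) * β n := mul_le_mul_of_nonneg_right ih hβ
      _ ≤ β (n ^ k * n) := hsuper _ _ (Nat.one_le_pow _ _ hn) hn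
      _ = β (n ^ (k + 1)) := by rw [pow_succ]

theorem eventually_le_rpow_of_tendsto_mul_rpow_neg {f : ℝ → ℝ} {a : ℝ}
    (hf : Tendsto (fun x : ℝ => f x * x ^ (-a)) atTop (nhds 0)) :
    ∀ᶠ x in atTop, f x ≤ x ^ a := by
  filter_upwards [hf.eventually_lt_const one_pos, eventually_gt_atTop 0] with x hlt hx
  rw [Real.rpow_neg hx.le, mul_inv_lt_iff₀ (Real.rpow_pos_of_pos hx a), one_mul] at hlt
  exact hlt.le

theorem le_rpow_of_pow_le_pow_rpow {y b e : ℝ} {k : ℕ} (hb : 0 ≤ b) (hk : k ≠ 0)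
    (h : y ^ k ≤ (b ^ k) ^ e) : y ≤ b ^ e := by
  rw [← Real.rpow_pow_comm hb] at h
  exact le_of_pow_le_pow_left₀ hk (Real.rpow_nonneg hb e) h

theorem le_rpow_of_forall_pos_le_rpow_add {y b e : ℝ} (hb : 0 < b)
    (h : ∀ a : ℝ, 0 < a → y ≤ b ^ (e + a)) : y ≤ b ^ e := by
  have hcont : Continuous fun a : ℝ => b ^ (e + a) :=
    continuous_const.rpow (continuous_const.add continuous_id) fun _ => Or.inl hb.ne'
  have htend : Tendsto (fun a : ℝ => b ^ (e + a)) (nhdsWithin 0 (Set.Ioi 0)) (nhds (b ^ e)) :=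
    tendsto_nhdsWithin_of_tendsto_nhds (hcont.tendsto' 0 _ (by simp))
  exact ge_of_tendsto htend (eventually_nhdsWithin_of_forall h)

theorem le_rpow_add_of_supermul {β : ℕ → ℝ} {f : ℝ → ℝ} {e a : ℝ}
    (hsuper : ∀ m n : ℕ, 1 ≤ m → 1 ≤ n → β m * β n ≤ β (m * n))
    (hupper : ∀ n : ℕ, 1 ≤ n → β n ≤ f n * (n : ℝ) ^ e) (hf : ∀ᶠ x in atTop, f x ≤ x ^ a)
    {n : ℕ} (hn : 2 ≤ n) (hβ : 0 ≤ β n) : β n ≤ (n : ℝ) ^ (e + a) := by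
  have hpow : Tendsto (fun k : ℕ => (n : ℝ) ^ k) atTop atTop :=
    tendsto_pow_atTop_atTop_of_one_lt (by exact_mod_cast hn)
  obtain ⟨k, hfk, hk⟩ := ((hpow.eventually hf).and (eventually_ge_atTop 1)).exists
  have hx : (0 : ℝ) < (n : ℝ) ^ k := by positivity
  refine le_rpow_of_pow_le_pow_rpow (Nat.cast_nonneg n) (Nat.one_le_iff_ne_zero.mp hk) ?_
  calc β n ^ k ≤ β (n ^ k) := pow_le_apply_pow_of_supermul hsuper (by omega) hβ hk
    _ ≤ f ((n : ℝ) ^ k) * ((n : ℝ) ^ k) ^ e := by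
        simpa only [Nat.cast_pow] using hupper _ (Nat.one_le_pow _ _ (by omega))
    _ ≤ ((n : ℝ) ^ k) ^ a * ((n : ℝ) ^ k) ^ e := mul_le_mul_of_nonneg_right hfk (by positivity)
    _ = ((n : ℝ) ^ k) ^ (e + a) := by rw [← Real.rpow_add hx, add_comm a]

theorem supermultiplicative_eq_rpow_general (q : ℝ) (f : ℝ → ℝ)
    (hfo : ∀ a : ℝ, 0 < a → Tendsto (fun x : ℝ => f x * x ^ (-a)) atTop (nhds 0))
    (β : ℕ → ℝ)
    (hsuper : ∀ m n : ℕ, 1 ≤ m → 1 ≤ n → β m * β n ≤ β (m * n))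
    (hlower : ∀ n : ℕ, 1 ≤ n → (n : ℝ) ^ (1 / q) ≤ β n)
    (hupper : ∀ n : ℕ, 1 ≤ n → β n ≤ f n * (n : ℝ) ^ (1 / q)) :
    ∀ n : ℕ, 1 ≤ n → β n = (n : ℝ) ^ (1 / q) := by
  intro n hn
  have hβ : 0 ≤ β n := (Real.rpow_nonneg (Nat.cast_nonneg n) _).trans (hlower n hn)
  obtain rfl | hn2 : n = 1 ∨ 2 ≤ n := by omega
  -- `1 ^ k` does not grow, but `β 1 * β 1 ≤ β 1` and `1 ≤ β 1` already force `β 1 = 1`.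
  · have hge : 1 ≤ β 1 := by simpa using hlower 1 le_rfl
    have hsq : β 1 * β 1 ≤ β 1 := by simpa using hsuper 1 1 le_rfl le_rfl
    simp only [Nat.cast_one, Real.one_rpow]
    nlinarith
  refine le_antisymm (le_rpow_of_forall_pos_le_rpow_add (by positivity) fun a ha => ?_)
    (hlower n hn)
  exact le_rpow_add_of_supermul hsuper hupper
    (eventually_le_rpow_of_tendsto_mul_rpow_neg (hfo a ha)) hn2 hβ

/-- If (β_n) is supermultiplicative, β_n ≥ n^{1/q}, and β_n ≤ f(n)·n^{1/q} where
f(x) = o(x^a) for all a > 0, then β_n = n^{1/q} for all n ≥ 1. -/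
theorem supermultiplicative_eq_rpow (q : ℝ) (hq : 1 ≤ q) (f : ℝ → ℝ)
    (hf1 : ∀ x : ℝ, 1 ≤ x → 1 ≤ f x)
    (hfo : ∀ a : ℝ, 0 < a → Tendsto (fun x : ℝ => f x * x ^ (-a)) atTop (nhds 0))
    (β : ℕ → ℝ) (hpos : ∀ n : ℕ, 1 ≤ n → 0 < β n)
    (hsuper : ∀ m n : ℕ, 1 ≤ m → 1 ≤ n → β m * β n ≤ β (m * n))
    (hlower : ∀ n : ℕ, 1 ≤ n → (n : ℝ) ^ (1 / q) ≤ β n)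
    (hupper : ∀ n : ℕ, 1 ≤ n → β n ≤ f n * (n : ℝ) ^ (1 / q)) :
    ∀ n : ℕ, 1 ≤ n → β n = (n : ℝ) ^ (1 / q) :=
  supermultiplicative_eq_rpow_general q f hfo β hsuper hlower hupper
end

section
/- Let X be a normed space over ℝ, let p ∈ (1,2], and suppose the norm satisfies (‖x+y‖^p + ‖x−y‖^p)/2 ≤ ‖x‖^p + ‖y‖^p for all x, y. Then there is a constant K > 0 (depending only on p) such that the modulus of smoothness satisfies ρ_X(τ) ≤ K τ^p for 0 ≤ τ ≤ 1. -/
/-!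
The Clarkson inequality at `x` and `y` with `‖x‖ = 1` bounds the `p`-th power mean of
`‖x + y‖` and `‖x - y‖` by `1 + ‖y‖ ^ p`; by convexity of `t ↦ t ^ p` the arithmetic mean `m`
obeys the same bound. If `m ≤ 1` there is nothing to prove, and otherwise `m ≤ m ^ p`.
So `K = 1` works.
-/

/-- The modulus of smoothness of a normed space:
ρ_X(τ) = sup{(‖x+τy‖ + ‖x−τy‖)/2 − 1 : ‖x‖ = ‖y‖ = 1}. -/
noncomputable def modulusOfSmoothness (X : Type) [NormedAddCommGroup X]
    [NormedSpace ℝ X] (τ : ℝ) : ℝ :=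
  sSup {d : ℝ | ∃ x y : X, ‖x‖ = 1 ∧ ‖y‖ = 1 ∧
    d = (‖x + τ • y‖ + ‖x - τ • y‖) / 2 - 1}

lemma Real.add_div_two_rpow_le {a b p : ℝ} (ha : 0 ≤ a) (hb : 0 ≤ b) (hp : 1 ≤ p) :
    ((a + b) / 2) ^ p ≤ (a ^ p + b ^ p) / 2 := by
  have h := (convexOn_rpow hp).2 (Set.mem_Ici.2 ha) (Set.mem_Ici.2 hb)
    (by norm_num : (0 : ℝ) ≤ 1 / 2) (by norm_num : (0 : ℝ) ≤ 1 / 2) (by norm_num)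
  simp only [smul_eq_mul] at h
  calc ((a + b) / 2) ^ p = (1 / 2 * a + 1 / 2 * b) ^ p := by ring_nf
    _ ≤ 1 / 2 * a ^ p + 1 / 2 * b ^ p := h
    _ = (a ^ p + b ^ p) / 2 := by ring

lemma Real.le_one_add_of_rpow_le_one_add {m t p : ℝ} (ht : 0 ≤ t) (hp : 1 ≤ p)
    (h : m ^ p ≤ 1 + t) : m ≤ 1 + t := by
  rcases le_or_gt m 1 with hm1 | hm1
  · linarith
  · exact (Real.self_le_rpow_of_one_le hm1.le hp).trans h

lemma add_norm_add_norm_sub_div_two_le_of_clarkson {X : Type*} [SeminormedAddCommGroup X]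
    {p : ℝ} (hp : 1 ≤ p)
    (hC : ∀ x y : X, (‖x + y‖ ^ p + ‖x - y‖ ^ p) / 2 ≤ ‖x‖ ^ p + ‖y‖ ^ p)
    {x : X} (hx : ‖x‖ = 1) (y : X) :
    (‖x + y‖ + ‖x - y‖) / 2 ≤ 1 + ‖y‖ ^ p := by
  have hmean : ((‖x + y‖ + ‖x - y‖) / 2) ^ p ≤ 1 + ‖y‖ ^ p := by
    calc ((‖x + y‖ + ‖x - y‖) / 2) ^ p
        ≤ (‖x + y‖ ^ p + ‖x - y‖ ^ p) / 2 :=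
          Real.add_div_two_rpow_le (norm_nonneg _) (norm_nonneg _) hp
      _ ≤ ‖x‖ ^ p + ‖y‖ ^ p := hC x y
      _ = 1 + ‖y‖ ^ p := by rw [hx, Real.one_rpow]
  exact Real.le_one_add_of_rpow_le_one_add (by positivity) hp hmean

theorem modulus_of_smoothness_upper_bound_general (p : ℝ) (hp1 : 1 < p) :
    ∃ K : ℝ, 0 < K ∧
      ∀ (X : Type) [NormedAddCommGroup X] [NormedSpace ℝ X],
        (∀ x y : X, (‖x + y‖ ^ p + ‖x - y‖ ^ p) / 2 ≤ ‖x‖ ^ p + ‖y‖ ^ p) →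
        ∀ τ : ℝ, 0 ≤ τ → τ ≤ 1 → modulusOfSmoothness X τ ≤ K * τ ^ p := by
  refine ⟨1, one_pos, fun X _ _ hC τ hτ _ ↦ ?_⟩
  rw [one_mul]
  refine Real.sSup_le ?_ (Real.rpow_nonneg hτ p)
  rintro d ⟨x, y, hx, hy, rfl⟩
  have hτy : ‖τ • y‖ = τ := by rw [norm_smul, hy, Real.norm_of_nonneg hτ, mul_one]
  have h := add_norm_add_norm_sub_div_two_le_of_clarkson hp1.le hC hx (τ • y)
  rw [hτy] at h
  linarith

/-- If the norm satisfies the Clarkson-type inequality with exponent p ∈ (1,2],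
then ρ_X(τ) ≤ K τ^p on [0,1], with K depending only on p. -/
theorem modulus_of_smoothness_upper_bound (p : ℝ) (hp1 : 1 < p) (hp2 : p ≤ 2) :
    ∃ K : ℝ, 0 < K ∧
      ∀ (X : Type) [NormedAddCommGroup X] [NormedSpace ℝ X],
        (∀ x y : X, (‖x + y‖ ^ p + ‖x - y‖ ^ p) / 2 ≤ ‖x‖ ^ p + ‖y‖ ^ p) →
        ∀ τ : ℝ, 0 ≤ τ → τ ≤ 1 → modulusOfSmoothness X τ ≤ K * τ ^ p :=
  modulus_of_smoothness_upper_bound_general p hp1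
end
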